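/- arXiv:math/0607301 — 2 statements merged into one kernel-verified Lean document; each statement's English description precedes it below -/
import Mathlib

section
/- Let (W,S) be a chordal Coxeter system with a designated set of bad irreducible simplices containing at most one bad 5-edge, and suppose S has no bad separators. Let B be a simplex of (W,S) with two singleton components {a} and {b} for which there exists c ∈ S − B such that A = {a,b,c} is a bad maximal irreducible simplex of (W,S). Then B − {a,b} ⊆ A^⊥ and B ∪ {c} is a simplex of (W,S). -/
/-- A simple graph is *chordal* if every cycle of length at least four has a chord,
that is, an edge of the graph joining two vertices of the cycle that is not an
edge of the cycle. -/
def SimpleGraph.IsChordal {V : Type*} (G : SimpleGraph V) : Prop :=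
  ∀ ⦃v : V⦄ (w : G.Walk v v), w.IsCycle → 4 ≤ w.length →
    ∃ a b, a ∈ w.support ∧ b ∈ w.support ∧ G.Adj a b ∧ s(a, b) ∉ w.edges

/-- `B` is a `(c,f)`-separator of `G`: `c, f ∉ B` and `c` and `f` lie in different
connected components of the induced subgraph `G − B`. -/
def SimpleGraph.IsSeparator {V : Type*} (G : SimpleGraph V) (c f : V) (Bs : Set V) : Prop :=
  ∃ (hc : c ∈ Bsᶜ) (hf : f ∈ Bsᶜ), ¬ (G.induce Bsᶜ).Reachable ⟨c, hc⟩ ⟨f, hf⟩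

/-- `B` is a minimal `(c,f)`-separator: no proper subset of `B` is a `(c,f)`-separator. -/
def SimpleGraph.IsMinSeparator {V : Type*} (G : SimpleGraph V) (c f : V) (Bs : Set V) : Prop :=
  G.IsSeparator c f Bs ∧ ∀ Bs' ⊂ Bs, ¬ G.IsSeparator c f Bs'

/-- `u` and `g` lie in the same connected component of `G − B`. -/
def SimpleGraph.InSepComp {V : Type*} (G : SimpleGraph V) (Bs : Set V) (u g : V) : Prop :=
  ∃ (hu : u ∈ Bsᶜ) (hg : g ∈ Bsᶜ), (G.induce Bsᶜ).Reachable ⟨u, hu⟩ ⟨g, hg⟩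

namespace CoxeterMatrix

variable {B : Type*}

/-- The underlying graph of the presentation diagram of a Coxeter matrix:
vertices are the indices, and `s, t` are adjacent when `m(s,t) < ∞`
(`0` encodes `∞`). -/
def pDiagram (M : CoxeterMatrix B) : SimpleGraph B where
  Adj s t := s ≠ t ∧ M s t ≠ 0
  symm := by constructor; intro s t h; exact ⟨h.1.symm, by rw [M.symmetric]; exact h.2⟩
  loopless := by constructor; intro s h; exact h.1 rfl

/-- The underlying graph of the Coxeter diagram induced on a subset `A`:
`s, t ∈ A` are adjacent when `m(s,t) > 2` (including `m(s,t) = ∞`, encoded by `0`). -/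
def cDiagramOn (M : CoxeterMatrix B) (A : Set B) : SimpleGraph A where
  Adj s t := (s : B) ≠ (t : B) ∧ M s t ≠ 2
  symm := by constructor; intro s t h; exact ⟨h.1.symm, by rw [M.symmetric]; exact h.2⟩
  loopless := by constructor; intro s h; exact h.1 rfl

/-- A *simplex*: a subset whose elements pairwise satisfy `m(s,t) < ∞`. -/
def IsSimplex (M : CoxeterMatrix B) (A : Set B) : Prop :=
  A.Pairwise fun s t => M s t ≠ 0

/-- A subset is *irreducible* if its Coxeter diagram is connected. -/
def IsIrreducible (M : CoxeterMatrix B) (A : Set B) : Prop :=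
  (M.cDiagramOn A).Connected

def IsIrredSimplex (M : CoxeterMatrix B) (A : Set B) : Prop :=
  M.IsSimplex A ∧ M.IsIrreducible A

/-- A maximal irreducible simplex. -/
def IsMaxIrredSimplex (M : CoxeterMatrix B) (A : Set B) : Prop :=
  M.IsIrredSimplex A ∧ ∀ A' : Set B, A ⊂ A' → ¬ M.IsIrredSimplex A'

/-- `A^⊥ = {s : m(s,a) = 2 for all a ∈ A}`. -/
def perp (M : CoxeterMatrix B) (A : Set B) : Set B :=
  {s | ∀ a ∈ A, M s a = 2}

/-- Type `G₃` (= `H₃`): labels `3, 5` on a path, other label `2`. -/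
def IsTypeG3 (M : CoxeterMatrix B) (A : Set B) : Prop :=
  ∃ a b c : B, A = {a, b, c} ∧ M a b = 3 ∧ M b c = 5 ∧ M a c = 2

/-- Type `G₄` (= `H₄`): labels `3, 3, 5` on a path, other labels `2`. -/
def IsTypeG4 (M : CoxeterMatrix B) (A : Set B) : Prop :=
  ∃ a b c d : B, A = {a, b, c, d} ∧ M a b = 3 ∧ M b c = 3 ∧ M c d = 5 ∧
    M a c = 2 ∧ M a d = 2 ∧ M b d = 2

/-- A set of *bad edges*: a symmetric set of pairs `{a,b}` with `m(a,b) ≥ 5` such that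
every irreducible simplex properly containing `{a,b}` is of type `G₃` or `G₄`. -/
def IsBadEdgeSet (M : CoxeterMatrix B) (E : B → B → Prop) : Prop :=
  (∀ a b, E a b → E b a) ∧
  (∀ a b, E a b → M a b = 0 ∨ 5 ≤ M a b) ∧
  (∀ a b, E a b → ∀ A : Set B, M.IsIrredSimplex A → ({a, b} : Set B) ⊂ A →
    M.IsTypeG3 A ∨ M.IsTypeG4 A)

/-- A *bad* irreducible simplex: an irreducible simplex containing a bad edge. -/
def IsBadSimplex (M : CoxeterMatrix B) (E : B → B → Prop) (A : Set B) : Prop :=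
  M.IsIrredSimplex A ∧ ∃ a ∈ A, ∃ b ∈ A, E a b

/-- A *bad separator*: a subset `Bs` containing a pair of eyes `a, b` with `m(a,b) = 2`,
with a bad focus `c ∉ Bs` making `{a,b,c}` a bad maximal irreducible simplex,
`Bs ⊆ {a,b} ∪ {a,b,c}^⊥`, and with a good focus `f ∉ Bs` making `Bs` a minimal
`(c,f)`-separator of the presentation diagram. -/
def IsBadSeparator (M : CoxeterMatrix B) (E : B → B → Prop) (Bs : Set B) : Prop :=
  ∃ a b c : B, a ∈ Bs ∧ b ∈ Bs ∧ M a b = 2 ∧ c ∉ Bs ∧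
    M.IsMaxIrredSimplex {a, b, c} ∧ M.IsBadSimplex E {a, b, c} ∧
    Bs ⊆ {a, b} ∪ M.perp {a, b, c} ∧
    ∃ f, f ∉ Bs ∧ M.pDiagram.IsMinSeparator c f Bs

/-- `{x, y}` is a bad 5-edge: `m(x,y) = 5` and every irreducible simplex
properly containing `{x,y}` is of type `G₃` or `G₄`. -/
def IsBad5Edge (M : CoxeterMatrix B) (x y : B) : Prop :=
  x ≠ y ∧ M x y = 5 ∧ ∀ A : Set B, M.IsIrredSimplex A → ({x, y} : Set B) ⊂ A →
    M.IsTypeG3 A ∨ M.IsTypeG4 A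

/-- The bad-edge set consisting of the single unordered pair `{x, y}`. -/
def singleEdge (x y : B) : B → B → Prop :=
  fun u v => (u = x ∧ v = y) ∨ (u = y ∧ v = x)

end CoxeterMatrix

/-!
Let `x ∈ B − {a,b}`. Both `m(a,x)` and `m(b,x)` equal `2`, so once `m(c,x) < ∞` the set
`{a,b,c,x}` is a simplex and maximality of the irreducible simplex `{a,b,c}` forces
`x ∈ {a,b,c}^⊥`. If `m(c,x) = ∞`, the neighbourhood of `c` in the presentation diagram separates
`c` from `x`; a minimal `(c,x)`-separator inside it contains `a` and `b` (through the paths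
`c - a - x` and `c - b - x`), and in a chordal graph minimal separators are cliques (Dirac).
Every other vertex of the separator is then joined to `a`, `b`, `c`, so it lies in `{a,b,c}^⊥`,
and the separator is a bad separator.
-/

namespace SimpleGraph

variable {V : Type*} {G : SimpleGraph V}

section Chordless

lemma Walk.isChordless_of_forall_length_le {T : Set V} {s t : V} {P : G.Walk s t}
    (hT : ∀ z ∈ P.support, z ∈ T)
    (hmin : ∀ w : G.Walk s t, (∀ z ∈ w.support, z ∈ T) → P.length ≤ w.length) :
    P.IsChordless := by
  -- a chord `u v` of `P = w₁ ++ w₂ ++ w₃` with `w₂ : u ⟶ v` would give the shortcut `w₁ ++ uv ++ w₃`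
  have shortcut : ∀ {u v : V} (huv : G.Adj u v) (w₁ : G.Walk s u) (w₂ : G.Walk u v)
      (w₃ : G.Walk v t), P = w₁.append (w₂.append w₃) → s(u, v) ∈ P.edges := by
    intro u v huv w₁ w₂ w₃ hP
    subst hP
    have hle := hmin (w₁.append (.cons huv w₃)) fun z hz => hT z (by
      simp only [Walk.mem_support_append_iff, Walk.support_cons, List.mem_cons] at hz ⊢
      rcases hz with hz | rfl | hz
      exacts [.inl hz, .inr (.inl w₂.start_mem_support), .inr (.inr hz)])
    simp only [Walk.length_append, Walk.length_cons] at hle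
    cases w₂ with
    | nil => exact absurd huv (G.loopless.irrefl u)
    | cons h w =>
      cases w with
      | nil => simp
      | cons => simp only [Walk.length_cons] at hle; omega
  refine Walk.isChordless_iff_forall_mem_edges.2 fun u v hu hv huv => ?_
  obtain ⟨q, r, rfl⟩ := Walk.mem_support_iff_exists_append.1 hu
  rcases (Walk.mem_support_append_iff _ _).1 hv with hv | hv
  · obtain ⟨q₁, q₂, rfl⟩ := Walk.mem_support_iff_exists_append.1 hv
    rw [Sym2.eq_swap]
    exact shortcut huv.symm q₁ q₂ r (Walk.append_assoc _ _ _).symm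
  · obtain ⟨r₁, r₂, rfl⟩ := Walk.mem_support_iff_exists_append.1 hv
    exact shortcut huv q r₁ r₂ rfl

lemma Walk.exists_isPath_isChordless {T : Set V} {u v : V} (w : G.Walk u v)
    (hw : ∀ z ∈ w.support, z ∈ T) :
    ∃ P : G.Walk u v, P.IsPath ∧ P.IsChordless ∧ ∀ z ∈ P.support, z ∈ T := by
  classical
  obtain ⟨P, hPT, hPmin⟩ := (measure fun w : G.Walk u v => w.length).wf.has_min
    {w | ∀ z ∈ w.support, z ∈ T} ⟨w, hw⟩
  have hT : ∀ z ∈ P.bypass.support, z ∈ T := fun z hz => hPT z (P.support_bypass_subset_support hz)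
  refine ⟨P.bypass, P.bypass_isPath, Walk.isChordless_of_forall_length_le hT fun w hw => ?_, hT⟩
  exact P.length_bypass_le_length.trans (not_lt.1 (hPmin w hw))

lemma Walk.IsPath.isCycle_append_reverse {s t : V} {P Q : G.Walk s t} (hP : P.IsPath)
    (hQ : Q.IsPath) (hdisj : ∀ u ∈ P.support, u ∈ Q.support → u = s ∨ u = t)
    (hlen : 3 ≤ P.length + Q.length) : (P.append Q.reverse).IsCycle := by
  have hnil : ¬ (P.append Q.reverse).Nil := fun h => by
    have := Walk.length_eq_zero_iff.2 h
    simp only [Walk.length_append, Walk.length_reverse] at this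
    omega
  refine Walk.isCycle_iff_isPath_tail_and_le_length.2 ⟨?_, by simpa using hlen⟩
  rw [Walk.isPath_def, Walk.support_tail_of_not_nil _ hnil, Walk.tail_support_append,
    List.nodup_append]
  refine ⟨hP.support_nodup.sublist (List.tail_sublist _),
    hQ.reverse.support_nodup.sublist (List.tail_sublist _), ?_⟩
  rintro u huP _ huQ rfl
  have huQ' : u ∈ Q.support := by simpa using List.mem_of_mem_tail huQ
  rcases hdisj u (List.mem_of_mem_tail huP) huQ' with rfl | rfl
  · have hPn := hP.support_nodup
    rw [← P.cons_tail_support, List.nodup_cons] at hPn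
    exact hPn.1 huP
  · have hQn := hQ.reverse.support_nodup
    rw [← Q.reverse.cons_tail_support, List.nodup_cons] at hQn
    exact hQn.1 huQ

/-- The two paths close up to a cycle of length at least four whose only possible chord is
`s t`. -/
lemma IsChordal.adj_of_isChordless (hG : G.IsChordal) {s t : V} (hst : s ≠ t)
    {P Q : G.Walk s t} (hP : P.IsPath) (hQ : Q.IsPath) (hPc : P.IsChordless)
    (hQc : Q.IsChordless) (hdisj : ∀ u ∈ P.support, u ∈ Q.support → u = s ∨ u = t)
    (hnadj : ∀ u ∈ P.support, ∀ v ∈ Q.support, G.Adj u v → u = s ∨ u = t ∨ v = s ∨ v = t) :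
    G.Adj s t := by
  by_contra hadj
  have two_le : ∀ W : G.Walk s t, 2 ≤ W.length := fun W => by
    by_contra h
    interval_cases hW : W.length
    · exact hst (Walk.eq_of_length_eq_zero hW)
    · exact hadj (Walk.adj_of_length_eq_one hW)
  have hlen : 4 ≤ P.length + Q.length := by linarith [two_le P, two_le Q]
  set C := P.append Q.reverse with hCdef
  have hC : C.IsCycle := hP.isCycle_append_reverse hQ hdisj (by omega)
  obtain ⟨u, v, hu, hv, huv, hne⟩ := hG C hC (by simpa [hCdef] using hlen)
  have inP : u ∈ P.support → v ∈ P.support → False := fun hu hv =>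
    hne (by simp [hCdef, hPc.mem_edges hu hv huv])
  have inQ : u ∈ Q.support → v ∈ Q.support → False := fun hu hv =>
    hne (by simp [hCdef, hQc.mem_edges hu hv huv])
  simp only [hCdef, Walk.mem_support_append_iff, Walk.support_reverse, List.mem_reverse] at hu hv
  rcases hu with hu | hu <;> rcases hv with hv | hv
  · exact inP hu hv
  · rcases hnadj u hu v hv huv with rfl | rfl | rfl | rfl
    · exact inQ Q.start_mem_support hv
    · exact inQ Q.end_mem_support hv
    · exact inP hu P.start_mem_support
    · exact inP hu P.end_mem_support
  · rcases hnadj v hv u hu huv.symm with rfl | rfl | rfl | rfl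
    · exact inQ hu Q.start_mem_support
    · exact inQ hu Q.end_mem_support
    · exact inP P.start_mem_support hv
    · exact inP P.end_mem_support hv
  · exact inQ hu hv

end Chordless

section Separator

variable {Bs : Set V} {c f u v w : V}

lemma isSeparator_iff : G.IsSeparator c f Bs ↔ c ∉ Bs ∧ f ∉ Bs ∧ ¬ G.InSepComp Bs c f :=
  ⟨fun ⟨hc, hf, h⟩ => ⟨hc, hf, fun ⟨_, _, h'⟩ => h h'⟩,
    fun ⟨hc, hf, h⟩ => ⟨hc, hf, fun h' => h ⟨hc, hf, h'⟩⟩⟩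

namespace InSepComp

lemma left_notMem (h : G.InSepComp Bs u v) : u ∉ Bs := h.1

lemma refl (hu : u ∉ Bs) : G.InSepComp Bs u u := ⟨hu, hu, .rfl⟩

lemma symm (h : G.InSepComp Bs u v) : G.InSepComp Bs v u :=
  let ⟨hu, hv, h⟩ := h
  ⟨hv, hu, h.symm⟩

lemma trans (h : G.InSepComp Bs u v) (h' : G.InSepComp Bs v w) : G.InSepComp Bs u w :=
  let ⟨hu, _, h⟩ := h
  let ⟨_, hw, h'⟩ := h'
  ⟨hu, hw, h.trans h'⟩

lemma of_adj (hu : u ∉ Bs) (hv : v ∉ Bs) (huv : G.Adj u v) : G.InSepComp Bs u v :=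
  ⟨hu, hv, (induce_adj.2 huv : (G.induce Bsᶜ).Adj ⟨u, hu⟩ ⟨v, hv⟩).reachable⟩

lemma exists_walk (h : G.InSepComp Bs u v) :
    ∃ p : G.Walk u v, ∀ z ∈ p.support, G.InSepComp Bs z v := by
  classical
  obtain ⟨hu, hv, ⟨p⟩⟩ := h
  refine ⟨p.map (Embedding.induce Bsᶜ).toHom, fun z hz => ?_⟩
  replace hz : z ∈ (p.map (Embedding.induce Bsᶜ).toHom).support := hz
  rw [Walk.support_map, List.mem_map] at hz
  obtain ⟨z, hz, rfl⟩ := hz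
  exact ⟨z.2, hv, (p.dropUntil z hz).reachable⟩

end InSepComp

lemma IsSeparator.symm (h : G.IsSeparator c f Bs) : G.IsSeparator f c Bs := by
  obtain ⟨hc, hf, h⟩ := isSeparator_iff.1 h
  exact isSeparator_iff.2 ⟨hf, hc, fun h' => h h'.symm⟩

lemma IsMinSeparator.symm (h : G.IsMinSeparator c f Bs) : G.IsMinSeparator f c Bs :=
  ⟨h.1.symm, fun Bs' hBs' h' => h.2 Bs' hBs' h'.symm⟩

lemma IsSeparator.mem_of_adj (h : G.IsSeparator c f Bs) (hcu : G.Adj c u) (huf : G.Adj u f) :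
    u ∈ Bs := by
  obtain ⟨hc, hf, hcf⟩ := isSeparator_iff.1 h
  by_contra hu
  exact hcf ((InSepComp.of_adj hc hu hcu).trans (InSepComp.of_adj hu hf huf))

lemma isSeparator_neighborSet (hcf : c ≠ f) (hnadj : ¬ G.Adj c f) :
    G.IsSeparator c f (G.neighborSet c) := by
  refine ⟨G.loopless.irrefl c, hnadj, fun ⟨p⟩ => ?_⟩
  obtain ⟨z, hz, -, -⟩ := p.exists_eq_cons_of_ne fun h => hcf (congrArg Subtype.val h)
  exact z.2 hz

lemma IsSeparator.exists_isMinSeparator_subset [Finite V] (h : G.IsSeparator c f Bs) :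
    ∃ Bs' ⊆ Bs, G.IsMinSeparator c f Bs' := by
  obtain ⟨Bs', ⟨hsub, hsep⟩, hmin⟩ := (wellFounded_lt (α := Set V)).has_min
    {Bs' | Bs' ⊆ Bs ∧ G.IsSeparator c f Bs'} ⟨Bs, subset_rfl, h⟩
  exact ⟨Bs', hsub, hsep, fun Bs'' hlt hsep' => hmin Bs'' ⟨hlt.subset.trans hsub, hsep'⟩ hlt⟩

/-- By minimality `Bs \ {u}` does not separate, so some `c`-`f` walk leaves the side of `c`
through `u`. -/
lemma IsMinSeparator.exists_adj_inSepComp (hmin : G.IsMinSeparator c f Bs) (hu : u ∈ Bs) :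
    ∃ p, G.Adj u p ∧ G.InSepComp Bs p c := by
  obtain ⟨hc, hf, hcf⟩ := isSeparator_iff.1 hmin.1
  have hreach : G.InSepComp (Bs \ {u}) c f := by
    have := hmin.2 _ (Set.sdiff_singleton_ssubset.2 hu)
    rw [isSeparator_iff] at this
    by_contra h
    exact this ⟨fun h' => hc h'.1, fun h' => hf h'.1, h⟩
  obtain ⟨p, hp⟩ := hreach.exists_walk
  obtain ⟨d, hd, hfst, hsnd⟩ := p.exists_boundary_dart {z | G.InSepComp Bs z c}
    (InSepComp.refl hc) (fun h => hcf h.symm)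
  have hdu : d.snd = u := by
    by_contra hne
    have hdB : d.snd ∉ Bs := fun h =>
      (hp _ (p.dart_snd_mem_support_of_mem_darts hd)).left_notMem ⟨h, hne⟩
    exact hsnd ((InSepComp.of_adj hdB hfst.left_notMem d.adj.symm).trans hfst)
  exact ⟨d.fst, hdu ▸ d.adj.symm, hfst⟩

lemma IsMinSeparator.exists_isChordless_path (hmin : G.IsMinSeparator c f Bs) {s t : V}
    (hs : s ∈ Bs) (ht : t ∈ Bs) :
    ∃ P : G.Walk s t, P.IsPath ∧ P.IsChordless ∧
      ∀ z ∈ P.support, z = s ∨ z = t ∨ G.InSepComp Bs z c := by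
  obtain ⟨ps, hsps, hps⟩ := hmin.exists_adj_inSepComp hs
  obtain ⟨pt, htpt, hpt⟩ := hmin.exists_adj_inSepComp ht
  obtain ⟨p, hp⟩ := (hps.trans hpt.symm).exists_walk
  refine (Walk.cons hsps (p.concat htpt.symm)).exists_isPath_isChordless fun z hz => ?_
  simp only [Walk.support_cons, Walk.support_concat, List.mem_cons, List.mem_append,
    List.not_mem_nil, or_false] at hz
  rcases hz with rfl | hz | rfl
  · exact .inl rfl
  · exact .inr (.inr ((hp z hz).trans hpt))
  · exact .inr (.inl rfl)

theorem IsChordal.adj_of_isMinSeparator (hG : G.IsChordal) (hmin : G.IsMinSeparator c f Bs)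
    {s t : V} (hs : s ∈ Bs) (ht : t ∈ Bs) (hst : s ≠ t) : G.Adj s t := by
  obtain ⟨-, -, hcf⟩ := isSeparator_iff.1 hmin.1
  obtain ⟨P, hP, hPc, hPs⟩ := hmin.exists_isChordless_path hs ht
  obtain ⟨Q, hQ, hQc, hQs⟩ := hmin.symm.exists_isChordless_path hs ht
  refine hG.adj_of_isChordless hst hP hQ hPc hQc (fun u hu hu' => ?_) (fun u hu v hv huv => ?_)
  · rcases hPs u hu with rfl | rfl | huc
    · exact .inl rfl
    · exact .inr rfl
    rcases hQs u hu' with rfl | rfl | huf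
    · exact .inl rfl
    · exact .inr rfl
    exact absurd (huc.symm.trans huf) hcf
  · rcases hPs u hu with rfl | rfl | huc
    · exact .inl rfl
    · exact .inr (.inl rfl)
    rcases hQs v hv with rfl | rfl | hvf
    · exact .inr (.inr (.inl rfl))
    · exact .inr (.inr (.inr rfl))
    exact absurd (huc.symm.trans ((InSepComp.of_adj huc.left_notMem hvf.left_notMem huv).trans
      hvf)) hcf

end Separator

end SimpleGraph

namespace CoxeterMatrix

variable {B : Type*} (M : CoxeterMatrix B)

def cDiagram : SimpleGraph B where
  Adj s t := s ≠ t ∧ M s t ≠ 2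
  symm := ⟨fun s t h => ⟨h.1.symm, by rw [M.symmetric]; exact h.2⟩⟩
  loopless := ⟨fun _ h => h.1 rfl⟩

variable {M} {A : Set B} {s t z : B}

lemma isIrreducible_iff : M.IsIrreducible A ↔ (M.cDiagram.induce A).Connected := Iff.rfl

lemma IsSimplex.pDiagram_adj (h : M.IsSimplex A) (hs : s ∈ A) (ht : t ∈ A) (hst : s ≠ t) :
    M.pDiagram.Adj s t :=
  ⟨hst, h hs ht hst⟩

lemma isSimplex_insert_iff :
    M.IsSimplex (insert z A) ↔ M.IsSimplex A ∧ ∀ a ∈ A, z ≠ a → M z a ≠ 0 := by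
  simp only [IsSimplex, Set.pairwise_insert, M.symmetric _ z, and_self]

lemma IsMaxIrredSimplex.mem_perp (hA : M.IsMaxIrredSimplex A) (hz : z ∉ A)
    (hs : M.IsSimplex (insert z A)) : z ∈ M.perp A := by
  intro a ha
  by_contra h
  have hza : M.cDiagram.Adj z a := ⟨fun h => hz (h ▸ ha), h⟩
  have hconn := SimpleGraph.induce_union_connected (SimpleGraph.induce_pair_connected_of_adj hza).1
    (isIrreducible_iff.1 hA.1.2).1 ⟨a, by simp, ha⟩
  rw [Set.insert_union, Set.singleton_union, Set.insert_eq_of_mem ha] at hconn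
  exact hA.2 _ (Set.ssubset_insert hz) ⟨hs, isIrreducible_iff.2 hconn⟩

theorem pDiagram_adj_of_forall_not_isBadSeparator [Finite B] {E : B → B → Prop}
    (hch : M.pDiagram.IsChordal) (hnobad : ∀ Bs : Set B, ¬ M.IsBadSeparator E Bs)
    {a b c x : B} (hab : M a b = 2) (hA : M.IsMaxIrredSimplex {a, b, c})
    (hbad : M.IsBadSimplex E {a, b, c}) (hca : c ≠ a) (hcb : c ≠ b) (hxc : x ≠ c)
    (hax : M.pDiagram.Adj a x) (hbx : M.pDiagram.Adj b x) : M.pDiagram.Adj c x := by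
  by_contra hcx
  obtain ⟨Bs, hBsN, hmin⟩ :=
    (SimpleGraph.isSeparator_neighborSet hxc.symm hcx).exists_isMinSeparator_subset
  have hAs := hA.1.1
  have ha : a ∈ Bs := hmin.1.mem_of_adj (hAs.pDiagram_adj (by simp) (by simp) hca) hax
  have hb : b ∈ Bs := hmin.1.mem_of_adj (hAs.pDiagram_adj (by simp) (by simp) hcb) hbx
  refine hnobad Bs ⟨a, b, c, ha, hb, hab, fun hc => M.pDiagram.loopless.irrefl c (hBsN hc),
    hA, hbad, fun z hz => ?_, x, (SimpleGraph.isSeparator_iff.1 hmin.1).2.1, hmin⟩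
  by_cases hza : z = a
  · simp [hza]
  by_cases hzb : z = b
  · simp [hzb]
  have hzc : M.pDiagram.Adj c z := hBsN hz
  refine .inr (hA.mem_perp (by simp [hza, hzb, hzc.ne.symm]) (isSimplex_insert_iff.2 ⟨hAs, ?_⟩))
  rintro y (rfl | rfl | rfl) hzy
  · exact (hch.adj_of_isMinSeparator hmin hz ha hzy).2
  · exact (hch.adj_of_isMinSeparator hmin hz hb hzy).2
  · exact hzc.symm.2

end CoxeterMatrix

theorem diff_subset_perp_and_isSimplex_general {B : Type*} [Finite B] (M : CoxeterMatrix B)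
    (E : B → B → Prop)
    (hch : M.pDiagram.IsChordal)
    (hnobad : ∀ Bs : Set B, ¬ M.IsBadSeparator E Bs)
    (Bset : Set B) (hB : M.IsSimplex Bset)
    (a b : B) (ha : a ∈ Bset) (hb : b ∈ Bset) (hab : a ≠ b)
    (hsa : ∀ x ∈ Bset, x ≠ a → M a x = 2)
    (hsb : ∀ x ∈ Bset, x ≠ b → M b x = 2)
    (c : B) (hc : c ∉ Bset)
    (hA : M.IsMaxIrredSimplex {a, b, c}) (hbad : M.IsBadSimplex E {a, b, c}) :
    Bset \ {a, b} ⊆ M.perp {a, b, c} ∧ M.IsSimplex (Bset ∪ {c}) := by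
  have hca : c ≠ a := fun h => hc (h ▸ ha)
  have hcb : c ≠ b := fun h => hc (h ▸ hb)
  have hcx : ∀ x ∈ Bset, x ≠ a → x ≠ b → M c x ≠ 0 := fun x hx hxa hxb =>
    (M.pDiagram_adj_of_forall_not_isBadSeparator hch hnobad (hsa b hb hab.symm) hA hbad hca hcb
      (fun h => hc (h ▸ hx)) ⟨hxa.symm, by simp [hsa x hx hxa]⟩
      ⟨hxb.symm, by simp [hsb x hx hxb]⟩).2
  refine ⟨fun x ⟨hx, hxab⟩ => ?_, ?_⟩
  · simp only [Set.mem_insert_iff, Set.mem_singleton_iff, not_or] at hxab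
    have hxc : x ≠ c := fun h => hc (h ▸ hx)
    refine hA.mem_perp (by simp [hxab.1, hxab.2, hxc])
      (CoxeterMatrix.isSimplex_insert_iff.2 ⟨hA.1.1, ?_⟩)
    rintro y (rfl | rfl | rfl) -
    · simp [M.symmetric x, hsa x hx hxab.1]
    · simp [M.symmetric x, hsb x hx hxab.2]
    · rw [M.symmetric]; exact hcx x hx hxab.1 hxab.2
  · rw [Set.union_singleton, CoxeterMatrix.isSimplex_insert_iff]
    refine ⟨hB, fun x hx _ => ?_⟩
    by_cases hxa : x = a
    · exact hxa ▸ hA.1.1 (by simp) (by simp) hca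
    by_cases hxb : x = b
    · exact hxb ▸ hA.1.1 (by simp) (by simp) hcb
    exact hcx x hx hxa hxb

/-- **Lemma 4.5.** Let `(W,S)` be a chordal Coxeter system with a set of bad
irreducible simplices coming from a set of bad edges containing at most one bad
5-edge, and suppose `S` has no bad separators. Let `Bset` be a simplex with two
singleton components `{a}` and `{b}` for which there is `c ∈ S − Bset` such that
`A = {a,b,c}` is a bad maximal irreducible simplex. Then `Bset − {a,b} ⊆ A^⊥` and
`Bset ∪ {c}` is a simplex. -/
theorem diff_subset_perp_and_isSimplex {B : Type*} [Finite B] (M : CoxeterMatrix B)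
    (E : B → B → Prop) (hE : M.IsBadEdgeSet E)
    (hch : M.pDiagram.IsChordal)
    (honce : ∀ a b a' b', E a b → E a' b' → M a b = 5 → M a' b' = 5 →
      ({a, b} : Set B) = ({a', b'} : Set B))
    (hnobad : ∀ Bs : Set B, ¬ M.IsBadSeparator E Bs)
    (Bset : Set B) (hB : M.IsSimplex Bset)
    (a b : B) (ha : a ∈ Bset) (hb : b ∈ Bset) (hab : a ≠ b)
    (hsa : ∀ x ∈ Bset, x ≠ a → M a x = 2)
    (hsb : ∀ x ∈ Bset, x ≠ b → M b x = 2)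
    (c : B) (hc : c ∉ Bset)
    (hA : M.IsMaxIrredSimplex {a, b, c}) (hbad : M.IsBadSimplex E {a, b, c}) :
    Bset \ {a, b} ⊆ M.perp {a, b, c} ∧ M.IsSimplex (Bset ∪ {c}) :=
  diff_subset_perp_and_isSimplex_general M E hch hnobad Bset hB a b ha hb hab hsa hsb c hc hA hbad
end

section
/- Let (W,S) be a Coxeter system with exactly one bad 5-edge {x,y}. Let C ⊆ S and let A = {a,b,c} be a bad irreducible simplex with m(a,b) = 2 such that {a,b} ⊆ C ⊆ {a,b} ∪ A^⊥. Then the pair {a,b} is uniquely determined by C (namely {a,b} = C − {x,y}^⊥) and {c} = {x,y} − {a,b}. -/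
/-!
The bad simplex `{a, b, c}` contains `x` and `y`. Since `m(x,y) = 5` while every entry
of `M` on `{a, b}` is at most `2`, the edge `{x, y}` is not contained in `{a, b}`, so the
focus `c` is the one element of `{x, y}` outside `{a, b}`. Connectivity of the Coxeter
diagram of `{a, b, c}` together with `m(a,b) = 2` forces `m(a,c) ≠ 2 ≠ m(b,c)`, so the eyes
are not in `{x, y}^⊥`, whereas `{a, b, c}^⊥ ⊆ {x, y}^⊥`.
-/

theorem Set.diff_eq_singleton_of_subset_insert {α : Type*} {S T : Set α} {c : α}
    (hT : T ⊆ insert c S) (hTS : ¬ T ⊆ S) : T \ S = {c} := by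
  obtain ⟨t, htT, htS⟩ := Set.not_subset.1 hTS
  obtain rfl : t = c := (hT htT).resolve_right htS
  ext s
  constructor
  · rintro ⟨hsT, hsS⟩
    exact (hT hsT).resolve_right hsS
  · rintro rfl
    exact ⟨htT, htS⟩

namespace CoxeterMatrix

variable {B : Type*} (M : CoxeterMatrix B)

theorem perp_anti {A A' : Set B} (h : A ⊆ A') : M.perp A' ⊆ M.perp A :=
  fun _ hs a ha => hs a (h ha)

theorem eq_diff_perp {E C A D : Set B} (hEC : E ⊆ C) (hC : C ⊆ E ∪ M.perp A)
    (hDA : D ⊆ A) (hE : Disjoint E (M.perp D)) : E = C \ M.perp D := by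
  refine subset_antisymm (fun e he => ⟨hEC he, Set.disjoint_left.1 hE he⟩) ?_
  rintro s ⟨hsC, hsD⟩
  exact (hC hsC).resolve_right fun hsA => hsD (M.perp_anti hDA hsA)

theorem apply_le_two_of_pair_subset {a b x y : B} (h : ({x, y} : Set B) ⊆ {a, b})
    (hab : M a b = 2) : M x y ≤ 2 := by
  have hba : M b a = 2 := M.symmetric a b ▸ hab
  rcases h (Set.mem_insert x _) with rfl | rfl <;>
    rcases h (Set.mem_insert_of_mem x rfl) with rfl | rfl <;> simp [hab, hba]

variable {M}

theorem IsIrreducible.exists_apply_ne_two {A : Set B} (hA : M.IsIrreducible A) {u v : B}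
    (hu : u ∈ A) (hv : v ∈ A) (huv : u ≠ v) : ∃ t ∈ A, t ≠ u ∧ M u t ≠ 2 := by
  obtain ⟨w⟩ := hA.preconnected ⟨u, hu⟩ ⟨v, hv⟩
  have hadj := w.adj_snd (w.not_nil_of_ne fun h => huv (congrArg Subtype.val h))
  exact ⟨(w.getVert 1).1, (w.getVert 1).2, fun h => hadj.1 h.symm, hadj.2⟩

theorem IsIrreducible.apply_ne_two_of_apply_eq_two {a b c : B}
    (h : M.IsIrreducible {a, b, c}) (hab : M a b = 2) (hac : a ≠ c) : M a c ≠ 2 := by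
  obtain ⟨t, ht, hta, hat⟩ := h.exists_apply_ne_two (by simp) (by simp) hac
  rcases ht with rfl | rfl | rfl
  · exact absurd rfl hta
  · exact absurd hab hat
  · exact hat

theorem isBadSimplex_singleEdge_iff {x y : B} {A : Set B} :
    M.IsBadSimplex (singleEdge x y) A ↔ M.IsIrredSimplex A ∧ x ∈ A ∧ y ∈ A := by
  constructor
  · rintro ⟨hA, u, hu, v, hv, ⟨rfl, rfl⟩ | ⟨rfl, rfl⟩⟩
    exacts [⟨hA, hu, hv⟩, ⟨hA, hv, hu⟩]
  · rintro ⟨hA, hx, hy⟩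
    exact ⟨hA, x, hx, y, hy, Or.inl ⟨rfl, rfl⟩⟩

end CoxeterMatrix

/-- **Lemma 5.1.** Let `(W,S)` be a Coxeter system whose only bad edge is the bad
5-edge `{x,y}`. Let `C ⊆ S` and let `A = {a,b,c}` be a bad irreducible simplex with
`m(a,b) = 2` such that `{a,b} ⊆ C ⊆ {a,b} ∪ A^⊥`. Then the pair of eyes is
determined by `C`, namely `{a,b} = C − {x,y}^⊥`, and `{c} = {x,y} − {a,b}`. -/
theorem eyes_eq_and_focus_eq {B : Type*} (M : CoxeterMatrix B)
    (x y : B) (hxy : M.IsBad5Edge x y)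
    (C : Set B) (a b c : B)
    (hA : M.IsBadSimplex (CoxeterMatrix.singleEdge x y) {a, b, c})
    (hab : M a b = 2)
    (habC : ({a, b} : Set B) ⊆ C)
    (hC : C ⊆ ({a, b} : Set B) ∪ M.perp {a, b, c}) :
    ({a, b} : Set B) = C \ M.perp {x, y} ∧
      ({c} : Set B) = ({x, y} : Set B) \ ({a, b} : Set B) := by
  obtain ⟨⟨-, hirr⟩, hxA, hyA⟩ := M.isBadSimplex_singleEdge_iff.1 hA
  have hxyA : ({x, y} : Set B) ⊆ {a, b, c} := Set.insert_subset hxA (by simpa using hyA)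
  have hxy_not_eyes : ¬ ({x, y} : Set B) ⊆ {a, b} := fun h => by
    have := M.apply_le_two_of_pair_subset h hab
    rw [hxy.2.1] at this
    omega
  have hfocus : ({x, y} : Set B) \ {a, b} = {c} := by
    refine Set.diff_eq_singleton_of_subset_insert ?_ hxy_not_eyes
    rwa [Set.pair_comm b c, Set.insert_comm a c] at hxyA
  obtain ⟨hcxy, hcab⟩ : c ∈ ({x, y} : Set B) \ {a, b} := hfocus ▸ rfl
  have hac : M a c ≠ 2 := hirr.apply_ne_two_of_apply_eq_two hab fun h => hcab (by simp [h])
  have hbc : M b c ≠ 2 := by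
    rw [Set.insert_comm] at hirr
    exact hirr.apply_ne_two_of_apply_eq_two (M.symmetric a b ▸ hab) fun h => hcab (by simp [h])
  refine ⟨M.eq_diff_perp habC hC hxyA (Set.disjoint_left.2 ?_), hfocus.symm⟩
  rintro s (rfl | rfl) hs
  exacts [hac (hs c hcxy), hbc (hs c hcxy)]
end
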